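/- The no-mixed-state assumption cannot be dropped for progress preservation: there exist two communicating systems S_1 and S_2 over disjoint participant sets, a set of interfaces H = {h_1, h_2} for {S_1, S_2} (whose interface CFSMs contain mixed states), a connection model CM for H, and a connection policy K for H complying with CM, such that S_1, S_2 and K all satisfy the progress property, but the multicomposition MC({S_1, S_2}, K) does not satisfy the progress property. -/

import Mathlib

namespace CFSM

/-- Direction of a communication action: output (`!`) or input (`?`). -/
inductive Dir : Type where
  | out : Dir
  | inp : Dir
deriving DecidableEq

instance : Fintype Dir :=
  ⟨{Dir.out, Dir.inp}, fun x => by cases x <;> simp⟩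

/-- An action `pq!a` (output) or `pq?a` (input) over participants `P` and messages `A`:
`snd` is the sender `p`, `rcv` the receiver `q`, `msg` the message `a`. -/
structure Act (P : Type) (A : Type) : Type where
  snd : P
  rcv : P
  dir : Dir
  msg : A

instance {P A : Type} [Finite P] [Finite A] : Finite (Act P A) :=
  Finite.of_injective (fun l => (l.snd, l.rcv, l.dir, l.msg))
    (fun a b h => by
      cases a; cases b
      simp only [Prod.mk.injEq] at h
      obtain ⟨h1, h2, h3, h4⟩ := h
      subst h1; subst h2; subst h3; subst h4; rfl)

/-- The subject of an action: the sender of an output, the receiver of an input. -/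
def Act.subject {P A : Type} (l : Act P A) : P :=
  match l.dir with
  | .out => l.snd
  | .inp => l.rcv

/-- A communicating system over participants `P` and messages `A`:
one machine (state type, initial state and transition relation) per participant. -/
structure CS (P : Type) (A : Type) : Type 1 where
  St : P → Type
  init : ∀ p, St p
  delta : ∀ p, Set (St p × Act P A × St p)

/-- All actions of the machine of participant `p` have subject `p`
(the name of the machine) and distinct endpoints. -/
def CS.WellFormed {P A : Type} (S : CS P A) : Prop :=
  ∀ p t, t ∈ S.delta p → ((t.2.1 : Act P A).subject = p ∧ t.2.1.snd ≠ t.2.1.rcv)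

/-- A configuration: a local state for each machine and a FIFO buffer
for each ordered pair of participants. -/
structure Config {P A : Type} (S : CS P A) : Type where
  st : ∀ p, S.St p
  ch : P → P → List A

/-- The initial configuration: all machines in their initial state, all channels empty. -/
def CS.initConfig {P A : Type} (S : CS P A) : Config S :=
  ⟨S.init, fun _ _ => []⟩

/-- The labelled transition relation between configurations. -/
def StepL {P A : Type} (S : CS P A) (c : Config S) (l : Act P A) (c' : Config S) : Prop :=
  match l.dir with
  | .out =>
      (c.st l.snd, l, c'.st l.snd) ∈ S.delta l.snd ∧
      (∀ p, p ≠ l.snd → c'.st p = c.st p) ∧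
      c'.ch l.snd l.rcv = c.ch l.snd l.rcv ++ [l.msg] ∧
      (∀ p q, (p, q) ≠ (l.snd, l.rcv) → c'.ch p q = c.ch p q)
  | .inp =>
      (c.st l.rcv, l, c'.st l.rcv) ∈ S.delta l.rcv ∧
      (∀ p, p ≠ l.rcv → c'.st p = c.st p) ∧
      c.ch l.snd l.rcv = l.msg :: c'.ch l.snd l.rcv ∧
      (∀ p q, (p, q) ≠ (l.snd, l.rcv) → c'.ch p q = c.ch p q)

/-- Unlabelled transition relation. -/
def Step {P A : Type} (S : CS P A) (c c' : Config S) : Prop :=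
  ∃ l, StepL S c l c'

/-- Reachability between configurations. -/
def Reach {P A : Type} (S : CS P A) : Config S → Config S → Prop :=
  Relation.ReflTransGen (Step S)

/-- The set of configurations reachable from the initial configuration. -/
def RC {P A : Type} (S : CS P A) : Set (Config S) :=
  {c | Reach S S.initConfig c}

/-- A local state is final if it has no outgoing transition. -/
def FinalSt {Q P A : Type} (δ : Set (Q × Act P A × Q)) (q : Q) : Prop :=
  ∀ l q', (q, l, q') ∉ δ

/-- A local state is receiving if it is not final and all its outgoing
transitions are labelled with input actions. -/
def ReceivingSt {Q P A : Type} (δ : Set (Q × Act P A × Q)) (q : Q) : Prop :=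
  (∃ l q', (q, l, q') ∈ δ) ∧ ∀ l q', (q, l, q') ∈ δ → (l : Act P A).dir = Dir.inp

/-- A local state is mixed if it has at least one outgoing output-labelled
transition and at least one outgoing input-labelled transition. -/
def MixedSt {Q P A : Type} (δ : Set (Q × Act P A × Q)) (q : Q) : Prop :=
  (∃ l q', (q, l, q') ∈ δ ∧ (l : Act P A).dir = Dir.out) ∧
  (∃ l q', (q, l, q') ∈ δ ∧ (l : Act P A).dir = Dir.inp)

/-- A machine has no mixed states. -/
def NoMixed {Q P A : Type} (δ : Set (Q × Act P A × Q)) : Prop :=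
  ∀ q, ¬ MixedSt δ q

/-- Deadlock configuration: all channels empty but all machines in receiving states. -/
def DeadlockConfig {P A : Type} (S : CS P A) (c : Config S) : Prop :=
  (∀ p q, c.ch p q = []) ∧ ∀ p, ReceivingSt (S.delta p) (c.st p)

def DeadlockFree {P A : Type} (S : CS P A) : Prop :=
  ∀ c ∈ RC S, ¬ DeadlockConfig S c

/-- Orphan-message configuration: all machines final but some channel nonempty. -/
def OrphanConfig {P A : Type} (S : CS P A) (c : Config S) : Prop :=
  (∀ p, FinalSt (S.delta p) (c.st p)) ∧ ∃ p q, c.ch p q ≠ []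

def OrphanFree {P A : Type} (S : CS P A) : Prop :=
  ∀ c ∈ RC S, ¬ OrphanConfig S c

/-- Unspecified reception configuration: some machine `r` is in a receiving state and,
for every input transition of `r`, the corresponding channel is nonempty with a
first element different from the expected message. -/
def URConfig {P A : Type} (S : CS P A) (c : Config S) : Prop :=
  ∃ r, ReceivingSt (S.delta r) (c.st r) ∧
    ∀ s a q', (c.st r, Act.mk s r Dir.inp a, q') ∈ S.delta r →
      (c.ch s r ≠ [] ∧ ¬ ∃ w, c.ch s r = a :: w)

def ReceptionErrorFree {P A : Type} (S : CS P A) : Prop :=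
  ∀ c ∈ RC S, ¬ URConfig S c

/-- Progress: every reachable configuration has an outgoing transition or all
machines are in final states. -/
def ProgressProp {P A : Type} (S : CS P A) : Prop :=
  ∀ c ∈ RC S, (∃ c', Step S c c') ∨ ∀ p, FinalSt (S.delta p) (c.st p)

/-- `p`-lock configuration: `p` is in a receiving state and never occurs as the
subject of an action in any transition sequence from `c`. -/
def PLockConfig {P A : Type} (S : CS P A) (c : Config S) (p : P) : Prop :=
  ReceivingSt (S.delta p) (c.st p) ∧
  ∀ c1 l c2, Reach S c c1 → StepL S c1 l c2 → l.subject ≠ p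

def LockFree {P A : Type} (S : CS P A) : Prop :=
  ∀ c ∈ RC S, ∀ p, ¬ PLockConfig S c p

section Composition

variable {I : Type} {P : I → Type} {A : Type}

/-- Messages occurring in input actions of the machine of `p`. -/
def inMsgs {Pp A : Type} (S : CS Pp A) (p : Pp) : Set A :=
  {a | ∃ q s q', (q, Act.mk s p Dir.inp a, q') ∈ S.delta p}

/-- Messages occurring in output actions of the machine of `p`. -/
def outMsgs {Pp A : Type} (S : CS Pp A) (p : Pp) : Set A :=
  {a | ∃ q r q', (q, Act.mk p r Dir.out a, q') ∈ S.delta p}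

/-- `CM` is a connection model for the interfaces `hh i` of the family `S`
(the interface `h_i` is represented by its index `i`). -/
def IsConnModel (S : ∀ i, CS (P i) A) (hh : ∀ i, P i) (CM : Set (I × A × I)) : Prop :=
  ∀ i a,
    (a ∈ inMsgs (S i) (hh i) →
      ∃ j, j ≠ i ∧ a ∈ outMsgs (S j) (hh j) ∧ (i, a, j) ∈ CM) ∧
    (a ∈ outMsgs (S i) (hh i) →
      ∃ j, j ≠ i ∧ a ∈ inMsgs (S j) (hh j) ∧ (j, a, i) ∈ CM)

/-- `CM` is a strong connection model: additionally the connecting partner is unique. -/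
def IsStrongConnModel (S : ∀ i, CS (P i) A) (hh : ∀ i, P i) (CM : Set (I × A × I)) : Prop :=
  IsConnModel S hh CM ∧
  ∀ i a,
    (a ∈ inMsgs (S i) (hh i) → ∃! j, (i, a, j) ∈ CM) ∧
    (a ∈ outMsgs (S i) (hh i) → ∃! j, (j, a, i) ∈ CM)

/-- Conditions (*) and (**) for a candidate transition relation `d` of the local
connection policy of interface `hh i` (the name `k_i` is represented by `i`). -/
def PolicySat (S : ∀ i, CS (P i) A) (hh : ∀ i, P i) (CM : Set (I × A × I)) (i : I)
    (d : Set ((S i).St (hh i) × Act I A × (S i).St (hh i))) : Prop :=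
  (∀ q r a q', (q, Act.mk r (hh i) Dir.inp a, q') ∈ (S i).delta (hh i) →
      ∃ j, j ≠ i ∧ (i, a, j) ∈ CM ∧ (q, Act.mk i j Dir.out a, q') ∈ d) ∧
  (∀ q r a q', (q, Act.mk (hh i) r Dir.out a, q') ∈ (S i).delta (hh i) →
      ∃ j, j ≠ i ∧ (j, a, i) ∈ CM ∧ (q, Act.mk j i Dir.inp a, q') ∈ d)

/-- `d` belongs to the local connection policy set `IS(M_{h_i}, CM)`:
it is a minimal relation satisfying (*) and (**).  (The states `q̇` of the
policy machine are identified with the states `q` of `M_{h_i}`.) -/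
def InIS (S : ∀ i, CS (P i) A) (hh : ∀ i, P i) (CM : Set (I × A × I)) (i : I)
    (d : Set ((S i).St (hh i) × Act I A × (S i).St (hh i))) : Prop :=
  PolicySat S hh CM i d ∧ ∀ d', d' ⊆ d → PolicySat S hh CM i d' → d' = d

/-- The communicating system (over the participant type `I` of names `k_i`)
determined by the family of transition relations `Kd` of a connection policy. -/
def policyCS (S : ∀ i, CS (P i) A) (hh : ∀ i, P i)
    (Kd : ∀ i, Set ((S i).St (hh i) × Act I A × (S i).St (hh i))) : CS I A where
  St := fun i => (S i).St (hh i)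
  init := fun i => (S i).init (hh i)
  delta := Kd

/-- `Kd` is a connection policy for the interfaces `hh` complying with `CM`. -/
def IsConnPolicy (S : ∀ i, CS (P i) A) (hh : ∀ i, P i) (CM : Set (I × A × I))
    (Kd : ∀ i, Set ((S i).St (hh i) × Act I A × (S i).St (hh i))) : Prop :=
  ∀ i, InIS S hh CM i (Kd i)

/-- States of the gateway for interface `hh i`: the original states plus one
fresh state per transition of `M_{h_i}`. -/
abbrev GWState (S : ∀ i, CS (P i) A) (hh : ∀ i, P i) (i : I) : Type :=
  (S i).St (hh i) ⊕ ((S i).St (hh i) × Act (P i) A × (S i).St (hh i))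

/-- Lifting of a local action of system `i` to the composed participant type. -/
def liftAct (i : I) (l : Act (P i) A) : Act ((j : I) × P j) A :=
  Act.mk ⟨i, l.snd⟩ ⟨i, l.rcv⟩ l.dir l.msg

/-- Transition relation of the gateway `M_{h_i} ⟲ M_{k_i}`. -/
def GWdelta (S : ∀ i, CS (P i) A) (hh : ∀ i, P i)
    (Kd : ∀ i, Set ((S i).St (hh i) × Act I A × (S i).St (hh i))) (i : I) :
    Set (GWState S hh i × Act ((j : I) × P j) A × GWState S hh i) :=
  {x | ∃ q a q',
    (∃ s r, (q, Act.mk (hh i) s Dir.out a, q') ∈ (S i).delta (hh i) ∧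
        (q, Act.mk r i Dir.inp a, q') ∈ Kd i ∧
        (x = (Sum.inl q, Act.mk ⟨r, hh r⟩ ⟨i, hh i⟩ Dir.inp a,
              Sum.inr (q, Act.mk (hh i) s Dir.out a, q')) ∨
         x = (Sum.inr (q, Act.mk (hh i) s Dir.out a, q'),
              Act.mk ⟨i, hh i⟩ ⟨i, s⟩ Dir.out a, Sum.inl q'))) ∨
    (∃ s r, (q, Act.mk s (hh i) Dir.inp a, q') ∈ (S i).delta (hh i) ∧
        (q, Act.mk i r Dir.out a, q') ∈ Kd i ∧
        (x = (Sum.inl q, Act.mk ⟨i, s⟩ ⟨i, hh i⟩ Dir.inp a,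
              Sum.inr (q, Act.mk s (hh i) Dir.inp a, q')) ∨
         x = (Sum.inr (q, Act.mk s (hh i) Dir.inp a, q'),
              Act.mk ⟨i, hh i⟩ ⟨r, hh r⟩ Dir.out a, Sum.inl q')))}

open Classical in
/-- State type of the machine of participant `⟨i, p⟩` in the multicomposition:
the gateway state type if `p` is the interface of system `i`, the original
state type otherwise. -/
noncomputable def MCSt (S : ∀ i, CS (P i) A) (hh : ∀ i, P i) (x : (i : I) × P i) : Type :=
  if x.2 = hh x.1 then GWState S hh x.1 else (S x.1).St x.2

/-- The multicomposition `MC({S_i}, K)`: all machines of the single systems,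
with the machine of each interface `hh i` replaced by its gateway. -/
noncomputable def MC (S : ∀ i, CS (P i) A) (hh : ∀ i, P i)
    (Kd : ∀ i, Set ((S i).St (hh i) × Act I A × (S i).St (hh i))) :
    CS ((i : I) × P i) A where
  St := MCSt S hh
  init := fun x => by
    by_cases hp : x.2 = hh x.1
    · have h : MCSt S hh x = GWState S hh x.1 := by simp [MCSt, hp]
      rw [h]; exact Sum.inl ((S x.1).init (hh x.1))
    · have h : MCSt S hh x = (S x.1).St x.2 := by simp [MCSt, hp]
      rw [h]; exact (S x.1).init x.2
  delta := fun x => by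
    by_cases hp : x.2 = hh x.1
    · have h : MCSt S hh x = GWState S hh x.1 := by simp [MCSt, hp]
      rw [h]; exact GWdelta S hh Kd x.1
    · have h : MCSt S hh x = (S x.1).St x.2 := by simp [MCSt, hp]
      rw [h]
      exact {t | ∃ q l q', (q, l, q') ∈ (S x.1).delta x.2 ∧ t = (q, liftAct x.1 l, q')}

/-- The state of the gateway of interface `hh i` in a configuration of the
multicomposition, as an element of `GWState`. -/
noncomputable def toGW (S : ∀ i, CS (P i) A) (hh : ∀ i, P i) (i : I)
    (x : MCSt S hh ⟨i, hh i⟩) : GWState S hh i :=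
  cast (by simp [MCSt]) x

/-- The state of a non-interface participant in a configuration of the
multicomposition, as an element of its original state type. -/
noncomputable def toLoc (S : ∀ i, CS (P i) A) (hh : ∀ i, P i) {i : I} {p : P i}
    (hp : p ≠ hh i) (x : MCSt S hh ⟨i, p⟩) : (S i).St p :=
  cast (by simp [MCSt, hp]) x

/-- Projection of a configuration of the multicomposition to system `S i`,
assuming the gateway state of `hh i` is not a fresh intermediate state
(i.e. it is of the form `Sum.inl q`). -/
noncomputable def projSys (S : ∀ i, CS (P i) A) (hh : ∀ i, P i)
    (Kd : ∀ i, Set ((S i).St (hh i) × Act I A × (S i).St (hh i)))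
    (i : I) (s : Config (MC S hh Kd))
    (hq : ∃ q, toGW S hh i (s.st ⟨i, hh i⟩) = Sum.inl q) : Config (S i) where
  st := fun p => by
    by_cases hp : p = hh i
    · rw [hp]; exact hq.choose
    · exact toLoc S hh hp (s.st ⟨i, p⟩)
  ch := fun p q => s.ch ⟨i, p⟩ ⟨i, q⟩

/-- Projection of a configuration of the multicomposition to the connection
policy `K`, assuming no gateway is in a fresh intermediate state. -/
noncomputable def projPolicy (S : ∀ i, CS (P i) A) (hh : ∀ i, P i)
    (Kd : ∀ i, Set ((S i).St (hh i) × Act I A × (S i).St (hh i)))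
    (s : Config (MC S hh Kd))
    (hq : ∀ i, ∃ q, toGW S hh i (s.st ⟨i, hh i⟩) = Sum.inl q) :
    Config (policyCS S hh Kd) where
  st := fun i => (hq i).choose
  ch := fun i j => s.ch ⟨i, hh i⟩ ⟨j, hh j⟩

end Composition

end CFSM

/-! The interface `h` of each copy starts in a mixed state: it may send to its local partner `p`,
which only waits for `h`, or receive from `p`. Each copy makes progress (`h` sends, `p` receives),
and so does the connection policy (each policy machine can send). A gateway, however, always
receives before it forwards, on both branches: `h`'s send becomes "first receive from the other
gateway", `h`'s receive stays "receive from `p`". So initially every machine of the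
multicomposition waits for input while all channels are empty: a deadlock. -/

namespace CFSM

section Steps

variable {P A : Type} {S : CS P A}

open Classical in
theorem exists_step_of_out {c : Config S} {s r : P} {a : A} {q' : S.St s}
    (h : (c.st s, Act.mk s r Dir.out a, q') ∈ S.delta s) : ∃ c', Step S c c' := by
  refine ⟨⟨Function.update c.st s q',
    fun p q => if (p, q) = (s, r) then c.ch s r ++ [a] else c.ch p q⟩,
    Act.mk s r Dir.out a, ?_, ?_, ?_, ?_⟩
  · simpa using h
  · intro p hp
    simp [hp]
  · simp
  · intro p q hpq
    simp [hpq]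

open Classical in
theorem exists_step_of_inp {c : Config S} {s r : P} {a : A} {q' : S.St r} {w : List A}
    (h : (c.st r, Act.mk s r Dir.inp a, q') ∈ S.delta r) (hch : c.ch s r = a :: w) :
    ∃ c', Step S c c' := by
  refine ⟨⟨Function.update c.st r q', fun p q => if (p, q) = (s, r) then w else c.ch p q⟩,
    Act.mk s r Dir.inp a, ?_, ?_, ?_, ?_⟩
  · simpa using h
  · intro p hp
    simp [hp]
  · simpa using hch
  · intro p q hpq
    simp [hpq]

theorem ReceivingSt.not_finalSt {Q : Type} {δ : Set (Q × Act P A × Q)} {q : Q}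
    (h : ReceivingSt δ q) : ¬ FinalSt δ q := by
  obtain ⟨⟨l, q', hq'⟩, -⟩ := h
  exact fun hfin => hfin l q' hq'

theorem DeadlockConfig.not_step {c : Config S} (hc : DeadlockConfig S c) (c' : Config S) :
    ¬ Step S c c' := by
  rintro ⟨⟨s, r, d, a⟩, hstep⟩
  cases d with
  | out => nomatch (hc.2 s).2 _ _ hstep.1
  | inp =>
    have hch : c.ch s r = a :: c'.ch s r := hstep.2.2.1
    simp [hc.1 s r] at hch

theorem not_progressProp_of_deadlock [Nonempty P] {c : Config S} (hc : c ∈ RC S)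
    (hd : DeadlockConfig S c) : ¬ ProgressProp S := by
  intro hprog
  rcases hprog c hc with ⟨c', hstep⟩ | hfin
  · exact hd.not_step c' hstep
  · exact (hd.2 (Classical.arbitrary P)).not_finalSt (hfin _)

theorem ProgressProp.of_invariant (Inv : Config S → Prop) (hinit : Inv S.initConfig)
    (hstep : ∀ c c', Inv c → Step S c c' → Inv c')
    (hprog : ∀ c, Inv c → (∃ c', Step S c c') ∨ ∀ p, FinalSt (S.delta p) (c.st p)) :
    ProgressProp S := by
  intro c hc
  refine hprog c ?_
  induction hc with
  | refl => exact hinit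
  | tail _ hs ih => exact hstep _ _ ih hs

end Steps

theorem mem_mpr_iff {α β L : Type} (e : α = β) (e' : Set (α × L × α) = Set (β × L × β))
    (s : Set (β × L × β)) (t : α × L × α) :
    t ∈ e'.mpr s ↔ (cast e t.1, t.2.1, cast e t.2.2) ∈ s := by
  subst e
  rfl

theorem cast_mpr_cancel {α β : Type} (e e' : α = β) (b : β) : cast e (e'.mpr b) = b := by
  subst e
  rfl

section Multicomposition

variable {I : Type} {P : I → Type} {A : Type} {S : ∀ i, CS (P i) A} {hh : ∀ i, P i}
  {Kd : ∀ i, Set ((S i).St (hh i) × Act I A × (S i).St (hh i))}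

theorem dir_eq_inp_of_mem_GWdelta_inl {i : I} {q : (S i).St (hh i)} {l x}
    (h : (Sum.inl q, l, x) ∈ GWdelta S hh Kd i) : l.dir = Dir.inp := by
  obtain ⟨_, _, _, ⟨_, _, _, _, h | h⟩ | ⟨_, _, _, _, h | h⟩⟩ := h <;>
    simp_all [Prod.ext_iff]

theorem GWdelta_receivingSt_inl {i : I} {q : (S i).St (hh i)}
    (h : ¬ FinalSt (GWdelta S hh Kd i) (Sum.inl q)) :
    ReceivingSt (GWdelta S hh Kd i) (Sum.inl q) := by
  refine ⟨?_, fun _ _ => dir_eq_inp_of_mem_GWdelta_inl⟩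
  simpa only [FinalSt, not_forall, not_not] using h

theorem MC_mem_delta_interface {i : I}
    (t : MCSt S hh ⟨i, hh i⟩ × Act ((j : I) × P j) A × MCSt S hh ⟨i, hh i⟩) :
    t ∈ (MC S hh Kd).delta ⟨i, hh i⟩ ↔
      (toGW S hh i t.1, t.2.1, toGW S hh i t.2.2) ∈ GWdelta S hh Kd i := by
  simp only [MC]
  rw [dif_pos trivial]
  exact mem_mpr_iff (by simp [MCSt]) _ _ _

theorem MC_mem_delta_of_ne {i : I} {p : P i} (hp : p ≠ hh i)
    (t : MCSt S hh ⟨i, p⟩ × Act ((j : I) × P j) A × MCSt S hh ⟨i, p⟩) :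
    t ∈ (MC S hh Kd).delta ⟨i, p⟩ ↔
      ∃ l, (toLoc S hh hp t.1, l, toLoc S hh hp t.2.2) ∈ (S i).delta p ∧
        t.2.1 = liftAct i l := by
  simp only [MC]
  rw [dif_neg hp]
  refine (mem_mpr_iff (by simp [MCSt, hp]) _ _ _).trans ?_
  constructor
  · rintro ⟨q, l, q', hmem, heq⟩
    simp only [Prod.mk.injEq] at heq
    obtain ⟨rfl, hl, rfl⟩ := heq
    exact ⟨l, hmem, hl⟩
  · rintro ⟨l, hmem, hl⟩
    exact ⟨_, l, _, hmem, by rw [hl]; rfl⟩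

theorem toGW_MC_initConfig (i : I) :
    toGW S hh i ((MC S hh Kd).initConfig.st ⟨i, hh i⟩) = Sum.inl ((S i).init (hh i)) := by
  simp only [CS.initConfig, MC]
  rw [dif_pos trivial]
  exact cast_mpr_cancel _ _ _

theorem toLoc_MC_initConfig {i : I} {p : P i} (hp : p ≠ hh i) :
    toLoc S hh hp ((MC S hh Kd).initConfig.st ⟨i, p⟩) = (S i).init p := by
  simp only [CS.initConfig, MC]
  rw [dif_neg hp]
  exact cast_mpr_cancel _ _ _

theorem MC_receivingSt_interface {i : I} {x : MCSt S hh ⟨i, hh i⟩}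
    (h : ReceivingSt (GWdelta S hh Kd i) (toGW S hh i x)) :
    ReceivingSt ((MC S hh Kd).delta ⟨i, hh i⟩) x := by
  obtain ⟨⟨l, y, hy⟩, hinp⟩ := h
  refine ⟨⟨l, cast (show GWState S hh i = MCSt S hh ⟨i, hh i⟩ by simp [MCSt]) y, ?_⟩,
    fun l' y' hy' => hinp l' _ ((MC_mem_delta_interface _).1 hy')⟩
  refine (MC_mem_delta_interface _).2 ?_
  convert hy using 3
  exact cast_cast _ _ y

theorem MC_receivingSt_of_ne {i : I} {p : P i} (hp : p ≠ hh i) {x : MCSt S hh ⟨i, p⟩}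
    (h : ReceivingSt ((S i).delta p) (toLoc S hh hp x)) :
    ReceivingSt ((MC S hh Kd).delta ⟨i, p⟩) x := by
  obtain ⟨⟨l, y, hy⟩, hinp⟩ := h
  refine ⟨⟨liftAct i l, cast (show (S i).St p = MCSt S hh ⟨i, p⟩ by simp [MCSt, hp]) y,
    (MC_mem_delta_of_ne hp _).2 ⟨l, by convert hy using 3; exact cast_cast _ _ y, rfl⟩⟩, ?_⟩
  intro l' y' hy'
  obtain ⟨l, hl, rfl⟩ := (MC_mem_delta_of_ne hp _).1 hy'
  exact hinp l _ hl

theorem MC_initConfig_deadlockConfig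
    (hS : ∀ i (p : P i), p ≠ hh i → ReceivingSt ((S i).delta p) ((S i).init p))
    (hK : ∀ i, ¬ FinalSt (GWdelta S hh Kd i) (Sum.inl ((S i).init (hh i)))) :
    DeadlockConfig (MC S hh Kd) (MC S hh Kd).initConfig := by
  refine ⟨fun _ _ => rfl, ?_⟩
  rintro ⟨i, p⟩
  by_cases hp : p = hh i
  · subst hp
    apply MC_receivingSt_interface
    rw [toGW_MC_initConfig]
    exact GWdelta_receivingSt_inl (hK i)
  · apply MC_receivingSt_of_ne hp
    rw [toLoc_MC_initConfig hp]
    exact hS i p hp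

end Multicomposition

namespace MixedExample

-- Participant `true` is the interface `h`, participant `false` its partner `p`.
abbrev sys : CS Bool Unit where
  St _ := Fin 3
  init _ := 0
  delta
    | true => {(0, Act.mk true false Dir.out (), 1), (0, Act.mk false true Dir.inp (), 2)}
    | false => {(0, Act.mk true false Dir.inp (), 1)}

-- Forced by (*) and (**): `h`'s input from `p` becomes an output to the other policy machine,
-- `h`'s output to `p` an input from it.
abbrev policy (b : Bool) : Set (Fin 3 × Act Bool Unit × Fin 3) :=
  {(0, Act.mk b (!b) Dir.out (), 2), (0, Act.mk (!b) b Dir.inp (), 1)}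

theorem sys_wellFormed : sys.WellFormed := by
  intro p t ht
  cases p <;> simp only [Set.mem_insert_iff, Set.mem_singleton_iff] at ht <;>
    rcases ht with rfl | rfl <;> exact ⟨rfl, by decide⟩

theorem sys_mixedSt : MixedSt (sys.delta true) 0 :=
  ⟨⟨_, 1, Or.inl rfl, rfl⟩, ⟨_, 2, Or.inr rfl, rfl⟩⟩

theorem isConnModel :
    IsConnModel (fun _ => sys) (fun _ => true) (Set.univ : Set (Bool × Unit × Bool)) := fun i _ =>
  ⟨fun _ => ⟨!i, by simp, ⟨0, false, 1, Or.inl rfl⟩, trivial⟩,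
   fun _ => ⟨!i, by simp, ⟨0, false, 2, Or.inr rfl⟩, trivial⟩⟩

theorem policy_policySat (i : Bool) :
    PolicySat (fun _ => sys) (fun _ => true) Set.univ i (policy i) := by
  constructor
  · intro q r a q' hmem
    simp only [Set.mem_insert_iff, Set.mem_singleton_iff, Prod.mk.injEq, Act.mk.injEq, reduceCtorEq,
      and_false, false_and, false_or, and_true] at hmem
    obtain ⟨rfl, -, rfl⟩ := hmem
    exact ⟨!i, by simp, trivial, Or.inl rfl⟩
  · intro q r a q' hmem
    simp only [Set.mem_insert_iff, Set.mem_singleton_iff, Prod.mk.injEq, Act.mk.injEq, reduceCtorEq,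
      and_false, false_and, or_false, and_true, true_and] at hmem
    obtain ⟨rfl, -, rfl⟩ := hmem
    exact ⟨!i, by simp, trivial, Or.inr rfl⟩

theorem policy_subset_of_policySat {i : Bool} {d : Set (Fin 3 × Act Bool Unit × Fin 3)}
    (hd : PolicySat (fun _ => sys) (fun _ => true) Set.univ i d) : policy i ⊆ d := by
  rintro x (rfl | rfl)
  · obtain ⟨j, hj, -, hmem⟩ := hd.1 0 false () 2 (Or.inr rfl)
    rwa [Bool.eq_not_iff.2 hj] at hmem
  · obtain ⟨j, hj, -, hmem⟩ := hd.2 0 false () 1 (Or.inl rfl)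
    rwa [Bool.eq_not_iff.2 hj] at hmem

theorem isConnPolicy : IsConnPolicy (fun _ => sys) (fun _ => true) Set.univ policy := fun i =>
  ⟨policy_policySat i, fun _ hsub hsat => hsub.antisymm (policy_subset_of_policySat hsat)⟩

-- The stuck configurations that are not final have `p` at `0`, `h` past `0` and nothing to read.
def SysInv (c : Config sys) : Prop :=
  c.ch false true = [] ∧ (c.st false = 0 → c.st true = 0 ∨ c.ch true false ≠ [])

theorem sysInv_step {c c' : Config sys} (h : SysInv c) (hs : Step sys c c') : SysInv c' := by
  obtain ⟨⟨s, r, d, a⟩, hst⟩ := hs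
  cases d with
  | out =>
    obtain ⟨hd, -, hch, hch_ne⟩ := hst
    cases s <;> simp only [Set.mem_insert_iff, Set.mem_singleton_iff, Prod.mk.injEq, Act.mk.injEq,
      reduceCtorEq, and_false, false_and, or_false, and_true, true_and] at hd
    obtain ⟨-, rfl, -⟩ := hd
    refine ⟨(hch_ne false true (by simp)).trans h.1, fun _ => Or.inr ?_⟩
    simp [hch]
  | inp =>
    obtain ⟨hd, -, hch, hch_ne⟩ := hst
    cases r <;> simp only [Set.mem_insert_iff, Set.mem_singleton_iff, Prod.mk.injEq, Act.mk.injEq,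
      reduceCtorEq, and_false, false_and, false_or, and_true] at hd
    · obtain ⟨-, rfl, h1⟩ := hd
      exact ⟨(hch_ne false true (by simp)).trans h.1,
        fun h0 => absurd (h1.symm.trans h0) (by decide)⟩
    · obtain ⟨-, rfl, -⟩ := hd
      simp [h.1] at hch

theorem sys_progressProp : ProgressProp sys := by
  refine .of_invariant SysInv ⟨rfl, fun _ => Or.inl rfl⟩ (fun _ _ => sysInv_step) ?_
  rintro c ⟨-, hinv⟩
  by_cases hsend : c.st true = 0
  · exact Or.inl (exists_step_of_out (s := true) (r := false) (a := ()) (q' := (1 : Fin 3))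
      (by simp [hsend]))
  by_cases hrecv : c.st false = 0
  · obtain ⟨a, w, hw⟩ := List.exists_cons_of_ne_nil ((hinv hrecv).resolve_left hsend)
    exact Or.inl (exists_step_of_inp (q' := (1 : Fin 3)) (by simp [hrecv]) hw)
  · right
    intro p l q' hmem
    cases p <;> simp_all

theorem policy_progressProp : ProgressProp (policyCS (fun _ => sys) (fun _ => true) policy) := by
  refine .of_invariant (fun _ => True) trivial (fun _ _ _ _ => trivial) ?_
  intro c _
  by_cases h0 : ∃ b, c.st b = (0 : Fin 3)
  · obtain ⟨b, hb⟩ := h0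
    exact Or.inl (exists_step_of_out (s := b) (r := !b) (a := ()) (q' := (2 : Fin 3))
      (by rw [hb]; exact Or.inl rfl))
  · right
    intro b l q' hmem
    refine h0 ⟨b, ?_⟩
    rcases hmem with hmem | hmem <;> exact congrArg Prod.fst hmem

theorem MC_not_progressProp : ¬ ProgressProp (MC (fun _ => sys) (fun _ => true) policy) := by
  refine not_progressProp_of_deadlock Relation.ReflTransGen.refl
    (MC_initConfig_deadlockConfig ?_ ?_)
  · intro i p hp
    obtain rfl : p = false := by simpa using hp
    refine ⟨⟨_, 1, rfl⟩, fun l q' h => ?_⟩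
    simp only [Set.mem_singleton_iff, Prod.mk.injEq, true_and] at h
    rw [h.1]
  · intro i hfin
    exact hfin (Act.mk ⟨!i, true⟩ ⟨i, true⟩ Dir.inp ())
      (Sum.inr (0, Act.mk true false Dir.out (), 1))
      ⟨0, (), 1, Or.inl ⟨false, !i, Or.inl rfl, Or.inr rfl, Or.inl rfl⟩⟩

end MixedExample

end CFSM

open CFSM in
/-- the no-mixed-state assumption cannot be dropped for
progress preservation. -/
theorem progress_not_preserved_with_mixed_states :
    ∃ (P : Bool → Type) (A : Type) (S : ∀ b, CS (P b) A) (hh : ∀ b, P b)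
      (CM : Set (Bool × A × Bool))
      (Kd : ∀ b, Set ((S b).St (hh b) × Act Bool A × (S b).St (hh b))),
      (∀ b, Finite (P b)) ∧ Finite A ∧ (∀ b p, Finite ((S b).St p)) ∧
      (∀ b, (S b).WellFormed) ∧
      (∀ b, ∃ q, MixedSt ((S b).delta (hh b)) q) ∧
      IsConnModel S hh CM ∧
      IsConnPolicy S hh CM Kd ∧
      (∀ b, ProgressProp (S b)) ∧
      ProgressProp (policyCS S hh Kd) ∧
      ¬ ProgressProp (MC S hh Kd) := by
  open MixedExample in
  exact ⟨fun _ => Bool, Unit, fun _ => sys, fun _ => true, Set.univ, policy,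
    fun _ => inferInstance, inferInstance, fun _ _ => inferInstanceAs (Finite (Fin 3)),
    fun _ => sys_wellFormed, fun _ => ⟨0, sys_mixedSt⟩, isConnModel, isConnPolicy,
    fun _ => sys_progressProp, policy_progressProp, MC_not_progressProp⟩
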